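/- arXiv:1707.04661 — 4 statements merged into one kernel-verified Lean document; each statement's English description precedes it below -/
import Mathlib

section
/- Let K be a field and let b, c, b', a, a' be finite index sets. Let M be a matrix over K with rows indexed by b ⊔ c ⊔ b' and columns indexed by a ⊔ b ⊔ c ⊔ b' ⊔ a', such that M(i,v) = 0 whenever i ∈ b and v ∈ b' ⊔ a', and M(i,v) = 0 whenever i ∈ b' and v ∈ a ⊔ b. If the submatrix of M consisting of the rows indexed by b ⊔ c and the columns indexed by a ⊔ b has rank |b| + |c|, and the submatrix of M consisting of the rows indexed by b' and the columns indexed by c ⊔ b' ⊔ a' has rank |b'|, then M has full row rank |b| + |c| + |b'|. -/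
/-!
Take a linear combination of the rows of `M` that vanishes. Restricted to the columns `a ⊔ b`
the rows of `b'` vanish, so the coefficients of the rows of `b ⊔ c` are zero by the first rank
condition; what is left is a vanishing combination of the rows of `b'`, whose coefficients are
zero by the second one.
-/

theorem Matrix.linearIndependent_row_iff_rank_eq_card {K m n : Type*} [Field K] [Fintype m]
    [Fintype n] {A : Matrix m n K} : LinearIndependent K A.row ↔ A.rank = Fintype.card m := by
  rw [A.rank_eq_finrank_span_row, linearIndependent_iff_card_eq_finrank_span, Set.finrank,
    eq_comm]

theorem LinearIndependent.sum_elim_of_map_eq_zero {R M M' ι₁ ι₂ : Type*} [Ring R]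
    [AddCommGroup M] [Module R M] [AddCommGroup M'] [Module R M']
    {v₁ : ι₁ → M} {v₂ : ι₂ → M} (f : M →ₗ[R] M') (h₁ : LinearIndependent R (f ∘ v₁))
    (h₂ : LinearIndependent R v₂) (hf : ∀ i, f (v₂ i) = 0) :
    LinearIndependent R (Sum.elim v₁ v₂) :=
  h₁.of_comp.sum_type h₂ <| (Submodule.range_ker_disjoint h₁).mono_right <|
    Submodule.span_le.mpr <| Set.range_subset_iff.mpr hf

theorem Matrix.linearIndependent_sum_elim_row_of_submatrix {R m n m₁ m₂ p q : Type*} [Ring R]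
    (M : Matrix m n R) (r₁ : m₁ → m) (r₂ : m₂ → m) (e₁ : p → n) (e₂ : q → n)
    (h₁ : LinearIndependent R (M.submatrix r₁ e₁).row)
    (h₂ : LinearIndependent R (M.submatrix r₂ e₂).row)
    (hzero : ∀ i j, M (r₂ i) (e₁ j) = 0) :
    LinearIndependent R (Sum.elim (M.row ∘ r₁) (M.row ∘ r₂)) :=
  LinearIndependent.sum_elim_of_map_eq_zero (LinearMap.funLeft R R e₁) h₁
    (LinearIndependent.of_comp (LinearMap.funLeft R R e₂) h₂) fun i => funext (hzero i)

theorem stmt0_general {K : Type*} [Field K]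
    {a b c b' a' : Type*} [Fintype a] [Fintype b] [Fintype c] [Fintype b'] [Fintype a']
    (M : Matrix (b ⊕ c ⊕ b') (a ⊕ b ⊕ c ⊕ b' ⊕ a') K)
    (hb'a : ∀ (i : b') (v : a), M (Sum.inr (Sum.inr i)) (Sum.inl v) = 0)
    (hb'b : ∀ (i : b') (v : b), M (Sum.inr (Sum.inr i)) (Sum.inr (Sum.inl v)) = 0)
    (hrank1 : (M.submatrix
        (Sum.elim (fun i : b => (Sum.inl i : b ⊕ c ⊕ b'))
          (fun i : c => (Sum.inr (Sum.inl i) : b ⊕ c ⊕ b')))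
        (Sum.elim (fun v : a => (Sum.inl v : a ⊕ b ⊕ c ⊕ b' ⊕ a'))
          (fun v : b => (Sum.inr (Sum.inl v) : a ⊕ b ⊕ c ⊕ b' ⊕ a')))).rank
        = Fintype.card b + Fintype.card c)
    (hrank2 : (M.submatrix
        (fun i : b' => (Sum.inr (Sum.inr i) : b ⊕ c ⊕ b'))
        (Sum.elim (fun v : c => (Sum.inr (Sum.inr (Sum.inl v)) : a ⊕ b ⊕ c ⊕ b' ⊕ a'))
          (Sum.elim (fun v : b' => (Sum.inr (Sum.inr (Sum.inr (Sum.inl v))) : a ⊕ b ⊕ c ⊕ b' ⊕ a'))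
            (fun v : a' => (Sum.inr (Sum.inr (Sum.inr (Sum.inr v))) : a ⊕ b ⊕ c ⊕ b' ⊕ a'))))).rank
        = Fintype.card b') :
    M.rank = Fintype.card b + Fintype.card c + Fintype.card b' := by
  have h₁ := Matrix.linearIndependent_row_iff_rank_eq_card.mpr
    (hrank1.trans Fintype.card_sum.symm)
  have h₂ := Matrix.linearIndependent_row_iff_rank_eq_card.mpr hrank2
  have hM := M.linearIndependent_sum_elim_row_of_submatrix _ _ _ _ h₁ h₂ fun i v => by
    rcases v with v | v
    exacts [hb'a i v, hb'b i v]
  have hrow := (linearIndependent_equiv' (Equiv.sumAssoc b c b')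
    (by ext ((i | i) | i) <;> rfl)).mp hM
  rw [hrow.rank_matrix, Fintype.card_sum, Fintype.card_sum, add_assoc]

/-- gluing lemma for B-matrices, linear algebra form.
Let `K` be a field and `a b c b' a'` finite index sets. Let `M` be a matrix with rows
indexed by `b ⊕ c ⊕ b'` and columns indexed by `a ⊕ b ⊕ c ⊕ b' ⊕ a'` with the displayed
block-zero pattern. If the submatrix with rows `b ⊕ c` and columns `a ⊕ b` has rank
`|b| + |c|`, and the submatrix with rows `b'` and columns `c ⊕ b' ⊕ a'` has rank `|b'|`,
then `M` has full row rank `|b| + |c| + |b'|`. -/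
theorem stmt0 {K : Type*} [Field K]
    {a b c b' a' : Type*} [Fintype a] [Fintype b] [Fintype c] [Fintype b'] [Fintype a']
    [DecidableEq a] [DecidableEq b] [DecidableEq c] [DecidableEq b'] [DecidableEq a']
    (M : Matrix (b ⊕ c ⊕ b') (a ⊕ b ⊕ c ⊕ b' ⊕ a') K)
    (hbb' : ∀ (i : b) (v : b'), M (Sum.inl i) (Sum.inr (Sum.inr (Sum.inr (Sum.inl v)))) = 0)
    (hba' : ∀ (i : b) (v : a'), M (Sum.inl i) (Sum.inr (Sum.inr (Sum.inr (Sum.inr v)))) = 0)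
    (hb'a : ∀ (i : b') (v : a), M (Sum.inr (Sum.inr i)) (Sum.inl v) = 0)
    (hb'b : ∀ (i : b') (v : b), M (Sum.inr (Sum.inr i)) (Sum.inr (Sum.inl v)) = 0)
    (hrank1 : (M.submatrix
        (Sum.elim (fun i : b => (Sum.inl i : b ⊕ c ⊕ b'))
          (fun i : c => (Sum.inr (Sum.inl i) : b ⊕ c ⊕ b')))
        (Sum.elim (fun v : a => (Sum.inl v : a ⊕ b ⊕ c ⊕ b' ⊕ a'))
          (fun v : b => (Sum.inr (Sum.inl v) : a ⊕ b ⊕ c ⊕ b' ⊕ a')))).rank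
        = Fintype.card b + Fintype.card c)
    (hrank2 : (M.submatrix
        (fun i : b' => (Sum.inr (Sum.inr i) : b ⊕ c ⊕ b'))
        (Sum.elim (fun v : c => (Sum.inr (Sum.inr (Sum.inl v)) : a ⊕ b ⊕ c ⊕ b' ⊕ a'))
          (Sum.elim (fun v : b' => (Sum.inr (Sum.inr (Sum.inr (Sum.inl v))) : a ⊕ b ⊕ c ⊕ b' ⊕ a'))
            (fun v : a' => (Sum.inr (Sum.inr (Sum.inr (Sum.inr v))) : a ⊕ b ⊕ c ⊕ b' ⊕ a'))))).rank
        = Fintype.card b') :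
    M.rank = Fintype.card b + Fintype.card c + Fintype.card b' :=
  stmt0_general M hb'a hb'b hrank1 hrank2
end

section
/- Let k be a field, let p ≤ q be positive integers, and let B be a p×q integer matrix whose rows b_1, …, b_p are linearly independent over ℚ. Work in the group algebra of the additive group ℤ^q over k (Laurent polynomials in q variables), writing X^g for the basis element corresponding to g ∈ ℤ^q. Suppose z_1, …, z_N are elements of this group algebra such that for each i there is a vector g_i ∈ ℤ^q, a finite set S_i ⊆ ℤ_{≥0}^p containing 0, and scalars c_{i,e} ∈ k for e ∈ S_i with c_{i,0} ≠ 0, such that z_i = Σ_{e ∈ S_i} c_{i,e} · X^{g_i − eB}, where eB denotes the row vector Σ_u e(u)·b_u ∈ ℤ^q. If the vectors g_1, …, g_N are pairwise distinct, then z_1, …, z_N are linearly independent over k. -/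
/-!
Linear independence of the rows `b_u` of `B` gives a linear functional `w` on `ℚ^q` with
`w (b_u) = 1` for every `u`. Then `w (g_i - e B) = w (g_i) - ∑ e(u)`, so `X^(g_i)` occurs in `z_i`
with coefficient `c_{i,0} ≠ 0` and every other exponent of `z_i` has strictly smaller weight.
In a vanishing combination `∑ f_i z_i`, take `i` with `f_i ≠ 0` and `w (g_i)` maximal: no other
`z_j` with `f_j ≠ 0` involves `X^(g_i)`, so the coefficient of `X^(g_i)` is `f_i c_{i,0} ≠ 0`.
-/

theorem AddMonoidHom.map_sum_nsmul_pos {M Γ σ : Type*} [AddCommMonoid M] [AddCommMonoid Γ]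
    [PartialOrder Γ] [IsOrderedCancelAddMonoid Γ] [Fintype σ] (w : M →+ Γ) {b : σ → M}
    (hb : ∀ u, 0 < w (b u)) {e : σ → ℕ} (he : e ≠ 0) :
    0 < w (∑ u, e u • b u) := by
  obtain ⟨u, hu⟩ := Function.ne_iff.mp he
  rw [map_sum]
  exact Finset.sum_pos' (fun v _ => by rw [map_nsmul]; exact nsmul_nonneg (hb v).le _)
    ⟨u, Finset.mem_univ u, by rw [map_nsmul]; exact nsmul_pos (hb u) hu⟩

namespace Finsupp

variable {M R Γ : Type*}

def IsLeadingTerm [Zero R] [LT Γ] (w : M → Γ) (f : M →₀ R) (a : M) : Prop :=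
  f a ≠ 0 ∧ ∀ m ∈ f.support, m ≠ a → w m < w a

theorem IsLeadingTerm.apply_eq_zero [Zero R] [Preorder Γ] {w : M → Γ} {f : M →₀ R} {a m : M}
    (hf : IsLeadingTerm w f a) (hle : w a ≤ w m) (hm : m ≠ a) : f m = 0 :=
  notMem_support_iff.mp fun hmem => (hle.trans_lt (hf.2 m hmem hm)).false

theorem linearIndependent_of_isLeadingTerm {ι : Type*} [Ring R] [NoZeroDivisors R]
    [LinearOrder Γ] {w : M → Γ} {f : ι → M →₀ R} {a : ι → M} (ha : Function.Injective a)
    (hf : ∀ i, IsLeadingTerm w (f i) (a i)) : LinearIndependent R f := by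
  classical
  rw [linearIndependent_iff']
  intro s c hsum i hi
  by_contra hci
  obtain ⟨j, hj, hmax⟩ :=
    (s.filter (c · ≠ 0)).exists_max_image (w ∘ a) ⟨i, Finset.mem_filter.mpr ⟨hi, hci⟩⟩
  rw [Finset.mem_filter] at hj
  have hvanish : ∀ k ∈ s, k ≠ j → c k * f k (a j) = 0 := by
    intro k hk hkj
    by_cases hck : c k = 0
    · rw [hck, zero_mul]
    · rw [(hf k).apply_eq_zero (hmax k (Finset.mem_filter.mpr ⟨hk, hck⟩)) (ha.ne hkj.symm),
        mul_zero]
  have hcoeff : c j * f j (a j) = 0 := by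
    simpa [Finset.sum_apply', Finset.sum_eq_single_of_mem j hj.1 hvanish] using
      DFunLike.congr_fun hsum (a j)
  exact hj.2 ((mul_eq_zero.mp hcoeff).resolve_right (hf j).1)

theorem isLeadingTerm_sum_single_sub {σ : Type*} [Fintype σ] [AddCommGroup M] [AddCommGroup Γ]
    [LinearOrder Γ] [IsOrderedAddMonoid Γ] [AddCommMonoid R] (w : M →+ Γ) {b : σ → M}
    (hb : ∀ u, 0 < w (b u)) (a : M)
    {S : Finset (σ → ℕ)} {c : (σ → ℕ) → R} (h0 : 0 ∈ S) (hc0 : c 0 ≠ 0) :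
    IsLeadingTerm w (∑ e ∈ S, single (a - ∑ u, e u • b u) (c e)) a := by
  classical
  have hlt : ∀ e : σ → ℕ, e ≠ 0 → w (a - ∑ u, e u • b u) < w a := fun e he => by
    rw [map_sub]
    exact sub_lt_self _ (w.map_sum_nsmul_pos hb he)
  have hne : ∀ e : σ → ℕ, e ≠ 0 → a - ∑ u, e u • b u ≠ a := fun e he h =>
    (hlt e he).ne (congrArg w h)
  refine ⟨?_, fun m hm hma => ?_⟩
  · rw [Finset.sum_apply', Finset.sum_eq_single_of_mem 0 h0
      fun e _ he => single_eq_of_ne (hne e he).symm]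
    simpa using hc0
  · obtain ⟨e, -, he⟩ := Finset.mem_biUnion.mp (support_finsetSum hm)
    obtain rfl := Finset.mem_singleton.mp (support_single_subset he)
    exact hlt e fun h => hma (by simp [h])

end Finsupp

theorem stmt2_general {k : Type*} [Field k] {p q : ℕ}
    (B : Fin p → Fin q → ℤ)
    (hind : LinearIndependent ℚ (fun u : Fin p => fun v : Fin q => (B u v : ℚ)))
    {N : ℕ} (z : Fin N → AddMonoidAlgebra k (Fin q → ℤ))
    (g : Fin N → Fin q → ℤ)
    (S : Fin N → Finset (Fin p → ℕ))
    (c : Fin N → (Fin p → ℕ) → k)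
    (h0mem : ∀ i, (0 : Fin p → ℕ) ∈ S i)
    (hc0 : ∀ i, c i 0 ≠ 0)
    (hz : ∀ i, z i = ∑ e ∈ S i, c i e •
      AddMonoidAlgebra.single ((g i) - fun v : Fin q => ∑ u : Fin p, (e u : ℤ) * B u v) (1 : k))
    (hg : Function.Injective g) :
    LinearIndependent k z := by
  obtain ⟨φ, hφ⟩ := Module.exists_dual_forall_apply_eq_one hind.linearIndepOn_univ
  let w : (Fin q → ℤ) →+ ℚ :=
    φ.toAddMonoidHom.comp (AddMonoidHom.compLeft (Int.castAddHom ℚ) (Fin q))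
  have hw : ∀ u, 0 < w (B u) := fun u => by
    rw [show w (B u) = 1 from hφ u (Set.mem_univ u)]
    exact one_pos
  have hB : ∀ e : Fin p → ℕ, (fun v => ∑ u, (e u : ℤ) * B u v) = ∑ u, e u • B u := fun e => by
    ext v
    simp [Finset.sum_apply]
  have hlead : ∀ i, Finsupp.IsLeadingTerm w (z i).coeff (g i) := fun i => by
    have hcoeff : (z i).coeff = ∑ e ∈ S i, Finsupp.single (g i - ∑ u, e u • B u) (c i e) := by
      simp [hz, hB, AddMonoidAlgebra.coeff_sum]
    rw [hcoeff]
    exact Finsupp.isLeadingTerm_sum_single_sub w hw (g i) (h0mem i) (hc0 i)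
  exact .of_comp (AddMonoidAlgebra.coeffLinearEquiv k).toLinearMap
    (Finsupp.linearIndependent_of_isLeadingTerm hg hlead)

/-- linear independence of elements with distinct well-defined
g-vectors. Work in the group algebra of `ℤ^q` over the field `k` (Laurent polynomials
in `q` variables), with basis elements `X^g = single g 1` for `g ∈ ℤ^q`.
If `z i = ∑_{e ∈ S i} c i e • X^(g i − e·B)` where each `S i ⊆ ℤ_{≥0}^p` is finite,
`0 ∈ S i`, `c i 0 ≠ 0`, the rows of `B` are linearly independent over `ℚ`, and the
vectors `g i` are pairwise distinct, then the `z i` are linearly independent over `k`. -/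
theorem stmt2 {k : Type*} [Field k] {p q : ℕ} (hp : 0 < p) (hpq : p ≤ q)
    (B : Fin p → Fin q → ℤ)
    (hind : LinearIndependent ℚ (fun u : Fin p => fun v : Fin q => (B u v : ℚ)))
    {N : ℕ} (z : Fin N → AddMonoidAlgebra k (Fin q → ℤ))
    (g : Fin N → Fin q → ℤ)
    (S : Fin N → Finset (Fin p → ℕ))
    (c : Fin N → (Fin p → ℕ) → k)
    (h0mem : ∀ i, (0 : Fin p → ℕ) ∈ S i)
    (hc0 : ∀ i, c i 0 ≠ 0)
    (hz : ∀ i, z i = ∑ e ∈ S i, c i e •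
      AddMonoidAlgebra.single ((g i) - fun v : Fin q => ∑ u : Fin p, (e u : ℤ) * B u v) (1 : k))
    (hg : Function.Injective g) :
    LinearIndependent k z :=
  stmt2_general B hind z g S c h0mem hc0 hz hg
end

section
/- Let k be a field and l ≥ 2. Let f_1, …, f_{l−1} be injective linear maps with f_i : k^i → k^{i+1}. Then there exist matrices h_1 ∈ SL_1(k), h_2 ∈ SL_2(k), …, h_{l−1} ∈ SL_{l−1}(k) and g = h_l ∈ SL_l(k) such that h_{i+1} ∘ f_i = ι_i ∘ h_i for every 1 ≤ i ≤ l−1, where ι_i : k^i → k^{i+1} is the standard step inclusion e_j ↦ e_j. -/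
/-!
Every injective map `k^i → k^{i+1}` is `B ∘ ι_i` for some `B ∈ SL_{i+1}(k)`: complete its columns
to a basis and rescale the added column so that the determinant becomes `1`. Hence `SL_{i+1}(k)` acts
transitively on such maps, and the `h_i` are built one after the other, `h_{i+1}` being any element
of `SL_{i+1}(k)` carrying `f_i` to the injective map `ι_i ∘ h_i`.
-/

/-- The standard step inclusion matrix `ι_i : k^i → k^{i+1}`, `e_j ↦ e_j`. -/
def stepIncl (k : Type*) [Field k] (i : ℕ) : Matrix (Fin (i + 1)) (Fin i) k :=
  fun r c => if (r : ℕ) = (c : ℕ) then 1 else 0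

section StepIncl

open Matrix

variable {k : Type*} [Field k] {i : ℕ}

theorem mul_stepIncl_apply {m : Type*} (B : Matrix m (Fin (i + 1)) k) (r : m) (j : Fin i) :
    (B * stepIncl k i) r j = B r j.castSucc := by
  have hval (s : Fin (i + 1)) : (s : ℕ) = j ↔ s = j.castSucc := by simp [Fin.ext_iff]
  simp [mul_apply, stepIncl, hval]

theorem stepIncl_mulVec_injective : Function.Injective (stepIncl k i).mulVec := by
  intro x y hxy
  funext j
  simpa [Matrix.mulVec, dotProduct, stepIncl, Fin.val_injective.eq_iff] using
    congrFun hxy j.castSucc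

theorem exists_det_eq_one_mul_stepIncl_eq {M : Matrix (Fin (i + 1)) (Fin i) k}
    (hM : Function.Injective M.mulVec) :
    ∃ B : Matrix (Fin (i + 1)) (Fin (i + 1)) k, B.det = 1 ∧ B * stepIncl k i = M := by
  obtain ⟨v, hv⟩ := exists_linearIndependent_snoc_of_lt_finrank
    (Matrix.mulVec_injective_iff.mp hM) (by simp)
  set B₀ : Matrix (Fin (i + 1)) (Fin (i + 1)) k := (of (Fin.snoc M.col v))ᵀ
  have hB₀ : B₀.det ≠ 0 := by
    rw [← isUnit_iff_ne_zero, ← isUnit_iff_isUnit_det, ← linearIndependent_cols_iff_isUnit]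
    exact hv
  refine ⟨B₀.updateCol (Fin.last i) (B₀.det⁻¹ • v), ?_, ?_⟩
  · have hv_last : B₀.updateCol (Fin.last i) v = B₀ := by
      conv_rhs => rw [← updateCol_eq_self B₀ (Fin.last i)]
      simp [B₀]
    rw [det_updateCol_smul, hv_last, inv_mul_cancel₀ hB₀]
  · ext r j
    rw [mul_stepIncl_apply, updateCol_apply, if_neg (Fin.castSucc_ne_last j)]
    simp [B₀]

theorem exists_det_eq_one_mul_eq {M N : Matrix (Fin (i + 1)) (Fin i) k}
    (hM : Function.Injective M.mulVec) (hN : Function.Injective N.mulVec) :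
    ∃ A : Matrix (Fin (i + 1)) (Fin (i + 1)) k, A.det = 1 ∧ A * M = N := by
  obtain ⟨B, hBdet, rfl⟩ := exists_det_eq_one_mul_stepIncl_eq hM
  obtain ⟨C, hCdet, rfl⟩ := exists_det_eq_one_mul_stepIncl_eq hN
  have hB : IsUnit B.det := by simp [hBdet]
  refine ⟨C * B⁻¹, by simp [hBdet, hCdet], ?_⟩
  rw [Matrix.mul_assoc, ← Matrix.mul_assoc B⁻¹, nonsing_inv_mul B hB, Matrix.one_mul]

theorem exists_det_eq_one_mulVec_eq_stepIncl_mulVec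
    {f : (Fin i → k) →ₗ[k] (Fin (i + 1) → k)} (hf : Function.Injective f)
    {H : Matrix (Fin i) (Fin i) k} (hH : H.det = 1) :
    ∃ A : Matrix (Fin (i + 1)) (Fin (i + 1)) k,
      A.det = 1 ∧ ∀ x, A *ᵥ f x = stepIncl k i *ᵥ (H *ᵥ x) := by
  have hH_inj : Function.Injective H.mulVec := by
    rw [mulVec_injective_iff_isUnit, isUnit_iff_isUnit_det, hH]
    exact isUnit_one
  have hN : Function.Injective (stepIncl k i * H).mulVec := by
    have hcomp : (stepIncl k i * H).mulVec = (stepIncl k i).mulVec ∘ H.mulVec :=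
      funext fun x => (mulVec_mulVec x _ _).symm
    exact hcomp ▸ stepIncl_mulVec_injective.comp hH_inj
  have hF : Function.Injective (LinearMap.toMatrix' f).mulVec := by
    rwa [show (LinearMap.toMatrix' f).mulVec = f from funext (LinearMap.toMatrix'_mulVec f)]
  obtain ⟨A, hAdet, hA⟩ := exists_det_eq_one_mul_eq hF hN
  refine ⟨A, hAdet, fun x => ?_⟩
  rw [← LinearMap.toMatrix'_mulVec f, mulVec_mulVec, hA, mulVec_mulVec]

theorem exists_det_eq_one_chain (n : ℕ)
    (f : (i : ℕ) → (Fin i → k) →ₗ[k] (Fin (i + 1) → k))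
    (hf : ∀ i < n, Function.Injective (f i)) :
    ∃ h : (i : ℕ) → Matrix (Fin i) (Fin i) k, (∀ i ≤ n, (h i).det = 1) ∧
      ∀ i < n, ∀ x, h (i + 1) *ᵥ f i x = stepIncl k i *ᵥ (h i *ᵥ x) := by
  induction n with
  | zero => exact ⟨fun _ => 1, by simp, by simp⟩
  | succ n ih =>
    obtain ⟨h, hdet, hcomm⟩ := ih fun i hi => hf i (by omega)
    obtain ⟨A, hAdet, hA⟩ :=
      exists_det_eq_one_mulVec_eq_stepIncl_mulVec (hf n n.lt_succ_self) (hdet n le_rfl)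
    have hupd {i : ℕ} (hi : i ≤ n) : Function.update h (n + 1) A i = h i :=
      Function.update_of_ne (by omega) _ _
    refine ⟨Function.update h (n + 1) A, fun i hi => ?_, fun i hi x => ?_⟩
    · rcases hi.lt_or_eq with hi | rfl
      · rw [hupd (by omega), hdet i (by omega)]
      · rw [Function.update_self, hAdet]
    · rcases (Nat.lt_succ_iff.mp hi).lt_or_eq with hi | rfl
      · rw [hupd hi, hupd hi.le, hcomm i hi]
      · rw [Function.update_self, hupd le_rfl, hA]

end StepIncl

theorem stmt11_general {k : Type*} [Field k] {l : ℕ}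
    (f : (i : ℕ) → (Fin i → k) →ₗ[k] (Fin (i + 1) → k))
    (hinj : ∀ i : ℕ, 1 ≤ i → i ≤ l - 1 → Function.Injective (f i)) :
    ∃ h : (i : ℕ) → Matrix (Fin i) (Fin i) k,
      (∀ i : ℕ, 1 ≤ i → i ≤ l → (h i).det = 1) ∧
      (∀ i : ℕ, 1 ≤ i → i ≤ l - 1 → ∀ x : Fin i → k,
        (h (i + 1)).mulVec (f i x) = (stepIncl k i).mulVec ((h i).mulVec x)) := by
  have hf : ∀ i < l, Function.Injective (f i) := by
    rintro (_ | i) hi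
    · exact Function.injective_of_subsingleton _
    · exact hinj (i + 1) (by omega) (by omega)
  obtain ⟨h, hdet, hcomm⟩ := exists_det_eq_one_chain l f hf
  exact ⟨h, fun i _ hi => hdet i hi, fun i _ hi x => hcomm i (by omega) x⟩

/-- transitivity of the `SL`-actions on chains of injective maps.
Let `f_i : k^i → k^{i+1}` (`1 ≤ i ≤ l−1`) be injective linear maps. Then there exist
matrices `h_i ∈ SL_i(k)` for `1 ≤ i ≤ l` (with `g = h_l`) such that
`h_{i+1} ∘ f_i = ι_i ∘ h_i` for every `1 ≤ i ≤ l−1`, where `ι_i` is the standard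
step inclusion `e_j ↦ e_j`. -/
theorem stmt11 {k : Type*} [Field k] {l : ℕ} (hl : 2 ≤ l)
    (f : (i : ℕ) → (Fin i → k) →ₗ[k] (Fin (i + 1) → k))
    (hinj : ∀ i : ℕ, 1 ≤ i → i ≤ l - 1 → Function.Injective (f i)) :
    ∃ h : (i : ℕ) → Matrix (Fin i) (Fin i) k,
      (∀ i : ℕ, 1 ≤ i → i ≤ l → (h i).det = 1) ∧
      (∀ i : ℕ, 1 ≤ i → i ≤ l - 1 → ∀ x : Fin i → k,
        (h (i + 1)).mulVec (f i x) = (stepIncl k i).mulVec ((h i).mulVec x)) :=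
  stmt11_general f hinj
end

section
/- Let k be a field and l ≥ 2. Let f = (f_1,…,f_{l−1}) and f' = (f'_1,…,f'_{l−1}) be two chains of linear maps, f_i, f'_i : k^i → k^{i+1}. For 1 ≤ i ≤ l set F_i = f_{l−1}∘⋯∘f_i : k^i → k^l and F'_i = f'_{l−1}∘⋯∘f'_i : k^i → k^l (with F_l = F'_l = id). Assume that for every 1 ≤ i ≤ l−1 the l×l matrix whose first i columns are F_i(e_1),…,F_i(e_i) and whose last l−i columns are F'_{l−i}(e_1),…,F'_{l−i}(e_{l−i}) has nonzero determinant. Suppose g is an l×l matrix over k of determinant 1 and h_i, h'_i are i×i matrices of determinant 1 for 1 ≤ i ≤ l−1 such that, with h_l = h'_l = g, one has h_{i+1} ∘ f_i = f_i ∘ h_i and h'_{i+1} ∘ f'_i = f'_i ∘ h'_i for all 1 ≤ i ≤ l−1. Then g is the identity matrix. -/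
/-!
Put `V i = range (F i)` and `W j = range (F' j)`. A nonzero cross-determinant says
`V i ⊕ W (l - i) = k^l`, so `V`, `W` are opposite complete flags, and the intertwining relations
make both flags `g`-stable. Hence every line `V (t + 1) ⊓ W (l - t)` is spanned by an eigenvector
`u t` of `g`, say with eigenvalue `μ t`, and `u 0, …, u (i - 1)` is a basis of `V i`. Since `F i`
conjugates `h i` to the restriction of `g` to `V i`, `det (h i) = μ 0 ⋯ μ (i - 1)`; as all these
determinants are `1`, every `μ t = 1`, so `g` fixes a basis.
-/

open Module Function
open scoped Matrix

theorem LinearMap.det_eq_prod_of_apply_basis {R M ι : Type*} [CommRing R] [AddCommGroup M]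
    [Module R M] [Fintype ι] [DecidableEq ι] (b : Basis ι R M) {f : M →ₗ[R] M} {μ : ι → R}
    (hf : ∀ i, f (b i) = μ i • b i) : LinearMap.det f = ∏ i, μ i := by
  have hdiag : f = Matrix.toLin b b (Matrix.diagonal μ) :=
    b.ext fun i => by simp [Matrix.toLin_self, Matrix.diagonal_apply, hf, ite_smul]
  rw [hdiag, LinearMap.det_toLin, Matrix.det_diagonal]

theorem eq_one_of_forall_prod_range_eq_one {M : Type*} [CommMonoid M] {a : ℕ → M} {n : ℕ}
    (h : ∀ i ≤ n, ∏ t ∈ Finset.range i, a t = 1) {t : ℕ} (ht : t < n) : a t = 1 := by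
  simpa [Finset.prod_range_succ, h t ht.le] using h (t + 1) ht

section LinearAlgebra

variable {k E : Type*} [Field k] [AddCommGroup E] [Module k E]

theorem Matrix.eq_top_of_col_mem {n : Type*} [Fintype n] [DecidableEq n] {M : Matrix n n k}
    (hM : M.det ≠ 0) {p : Submodule k (n → k)} (hp : ∀ c, M.col c ∈ p) : p = ⊤ := by
  have hsurj : Surjective M.mulVecLin :=
    Matrix.mulVec_surjective_iff_isUnit.2 ((M.isUnit_iff_isUnit_det).2 hM.isUnit)
  rw [eq_top_iff, ← LinearMap.range_eq_top.2 hsurj, Matrix.range_mulVecLin,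
    Submodule.span_le]
  rintro - ⟨c, rfl⟩
  exact hp c

theorem Submodule.finrank_eq_of_sup_eq_top [FiniteDimensional k E] {p q : Submodule k E}
    {i j : ℕ} (hE : finrank k E = i + j) (hp : finrank k p ≤ i) (hq : finrank k q ≤ j)
    (hpq : p ⊔ q = ⊤) : finrank k p = i ∧ finrank k q = j ∧ p ⊓ q = ⊥ := by
  have hdim := Submodule.finrank_sup_add_finrank_inf_eq p q
  rw [hpq, finrank_top, hE] at hdim
  exact ⟨by omega, by omega, Submodule.finrank_eq_zero.1 (by omega)⟩

theorem Submodule.finrank_inf_eq_one [FiniteDimensional k E] {p q q' : Submodule k E}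
    (hq' : q' ≤ q) (hq : finrank k q = finrank k q' + 1) (hpq' : p ⊓ q' = ⊥)
    (hE : finrank k p + finrank k q' = finrank k E) : finrank k ↥(p ⊓ q) = 1 := by
  have hdim := Submodule.finrank_sup_add_finrank_inf_eq p q
  have hsup := Submodule.finrank_le (p ⊔ q)
  have hdim' := Submodule.finrank_sup_add_finrank_inf_eq (p ⊓ q) q'
  have hsup' := Submodule.finrank_mono (sup_le inf_le_right hq' : p ⊓ q ⊔ q' ≤ q)
  rw [inf_right_comm, hpq', bot_inf_eq, finrank_bot] at hdim'
  omega

theorem Submodule.exists_hasEigenvector_of_finrank_eq_one {N : Submodule k E}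
    (hN : finrank k N = 1) {g : Module.End k E} (hg : N ≤ N.comap g) :
    ∃ u ∈ N, ∃ c : k, g.HasEigenvector c u := by
  obtain ⟨⟨u, hu⟩, hu0, hspan⟩ := finrank_eq_one_iff'.1 hN
  obtain ⟨c, hc⟩ := hspan ⟨g u, hg hu⟩
  refine ⟨u, hu, c, Module.End.mem_eigenspace_iff.2 ?_, fun h => hu0 (by simp [h])⟩
  simpa using congrArg Subtype.val hc.symm

theorem linearIndependent_of_mem_of_notMem {V : ℕ → Submodule k E} {u : ℕ → E} {n : ℕ}
    (hmem : ∀ t i, t < i → i ≤ n → u t ∈ V i) (hnot : ∀ i < n, u i ∉ V i) :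
    LinearIndependent k (fun t : Fin n => u t) := by
  induction n with
  | zero => exact linearIndependent_empty_type
  | succ n ih =>
    refine linearIndependent_finSucc'.2 ⟨ih (fun t i hti hin => hmem t i hti (by omega))
      (fun i hi => hnot i (by omega)), fun hspan => hnot n (by omega) ?_⟩
    refine Submodule.span_le.2 ?_ hspan
    rintro - ⟨t, rfl⟩
    exact hmem t n t.isLt n.le_succ

theorem Matrix.det_eq_prod_of_intertwines {ι : Type*} [Fintype ι] [DecidableEq ι]
    {A : Matrix ι ι k} {F : (ι → k) →ₗ[k] E} (hF : Injective F) {g : Module.End k E}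
    (hgF : ∀ x, g (F x) = F (A *ᵥ x)) {u : ι → E} (hu : LinearIndependent k u)
    (hmem : ∀ t, u t ∈ LinearMap.range F) {μ : ι → k} (hgu : ∀ t, g (u t) = μ t • u t) :
    A.det = ∏ t, μ t := by
  choose x hx using hmem
  have hxind : LinearIndependent k x :=
    LinearIndependent.of_comp F (by simpa [comp_def, hx] using hu)
  have hAx : ∀ t, A *ᵥ x t = μ t • x t := fun t => hF (by rw [← hgF, hx, hgu, map_smul, hx])
  classical
  rw [← LinearMap.det_toLin', LinearMap.det_eq_prod_of_apply_basis
    (basisOfPiSpaceOfLinearIndependent hxind)]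
  simpa using hAx

end LinearAlgebra

section Flags

variable {k E : Type*} [Field k] [AddCommGroup E] [Module k E]

structure IsOppositeFlags (V W : ℕ → Submodule k E) (l : ℕ) : Prop where
  finrank_eq : finrank k E = l
  finrank_left : ∀ i ≤ l, finrank k (V i) = i
  finrank_right : ∀ i ≤ l, finrank k (W i) = i
  left_le_succ : ∀ i < l, V i ≤ V (i + 1)
  right_le_succ : ∀ i < l, W i ≤ W (i + 1)
  inf_eq_bot : ∀ i ≤ l, V i ⊓ W (l - i) = ⊥

namespace IsOppositeFlags

variable {V W : ℕ → Submodule k E} {l : ℕ}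

theorem left_mono (hVW : IsOppositeFlags V W l) {i j : ℕ} (hij : i ≤ j) (hj : j ≤ l) :
    V i ≤ V j := by
  -- truncating at `l` turns the chain into a monotone sequence
  have hmono : Monotone fun n => V (min n l) := monotone_nat_of_le_succ fun n => by
    rcases lt_or_ge n l with hn | hn
    · simpa [min_eq_left hn.le, min_eq_left (Nat.succ_le_of_lt hn)] using hVW.left_le_succ n hn
    · simp [min_eq_right hn, min_eq_right (hn.trans n.le_succ)]
  simpa [min_eq_left hj, min_eq_left (hij.trans hj)] using hmono hij

theorem finrank_inf_eq_one [FiniteDimensional k E] (hVW : IsOppositeFlags V W l) {t : ℕ}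
    (ht : t < l) : finrank k ↥(V (t + 1) ⊓ W (l - t)) = 1 := by
  have hsucc : l - (t + 1) + 1 = l - t := by omega
  refine Submodule.finrank_inf_eq_one (q' := W (l - (t + 1))) ?_ ?_ (hVW.inf_eq_bot _ ht) ?_
  · simpa [hsucc] using hVW.right_le_succ (l - (t + 1)) (by omega)
  · rw [hVW.finrank_right _ (by omega), hVW.finrank_right _ (by omega)]
    omega
  · rw [hVW.finrank_left _ ht, hVW.finrank_right _ (by omega), hVW.finrank_eq]
    omega

theorem exists_eigenvectors [FiniteDimensional k E] (hVW : IsOppositeFlags V W l)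
    {g : Module.End k E} (hgV : ∀ i, 1 ≤ i → i ≤ l → V i ≤ (V i).comap g)
    (hgW : ∀ i, 1 ≤ i → i ≤ l → W i ≤ (W i).comap g) :
    ∃ (u : ℕ → E) (μ : ℕ → k), (∀ t < l, g (u t) = μ t • u t) ∧
      (∀ t i, t < i → i ≤ l → u t ∈ V i) ∧ LinearIndependent k (fun t : Fin l => u t) := by
  have hline : ∀ t < l, ∃ u ∈ V (t + 1) ⊓ W (l - t), ∃ μ : k, g.HasEigenvector μ u :=
    fun t ht => Submodule.exists_hasEigenvector_of_finrank_eq_one (hVW.finrank_inf_eq_one ht)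
      (inf_le_inf (hgV _ (by omega) (by omega)) (hgW _ (by omega) (by omega)))
  choose! u hu μ hμ using hline
  have hmem : ∀ t i, t < i → i ≤ l → u t ∈ V i := fun t i hti hil =>
    hVW.left_mono hti hil (hu t (by omega)).1
  refine ⟨u, μ, fun t ht => (hμ t ht).apply_eq_smul, hmem,
    linearIndependent_of_mem_of_notMem hmem fun i hi hV => (hμ i hi).2 ?_⟩
  rw [← Submodule.mem_bot k, ← hVW.inf_eq_bot i hi.le]
  exact ⟨hV, (hu i hi).2⟩

end IsOppositeFlags

end Flags

section Chains

variable {k E : Type*} [Field k] [AddCommGroup E] [Module k E]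

theorem LinearMap.injective_of_finrank_range_eq {M : Type*} [AddCommGroup M] [Module k M]
    [FiniteDimensional k M] {F : M →ₗ[k] E} (hF : finrank k (LinearMap.range F) = finrank k M) :
    Injective F := by
  have hdim := LinearMap.finrank_range_add_finrank_ker F
  rw [← LinearMap.ker_eq_bot, ← Submodule.finrank_eq_zero]
  omega

theorem LinearMap.range_le_comap_range {M : Type*} [AddCommGroup M] [Module k M]
    {F : M →ₗ[k] E} {g : Module.End k E} {a : M → M} (hgF : ∀ x, g (F x) = F (a x)) :
    LinearMap.range F ≤ (LinearMap.range F).comap g := by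
  rintro - ⟨x, rfl⟩
  exact ⟨a x, (hgF x).symm⟩

variable {l : ℕ} {f : (i : ℕ) → (Fin i → k) →ₗ[k] (Fin (i + 1) → k)}
  {F : (i : ℕ) → (Fin i → k) →ₗ[k] E}

theorem range_le_range_succ_of_chain
    (hrec : ∀ i : ℕ, 1 ≤ i → i ≤ l - 1 → F i = (F (i + 1)).comp (f i)) {i : ℕ} (hi : i < l) :
    LinearMap.range (F i) ≤ LinearMap.range (F (i + 1)) := by
  rcases Nat.eq_zero_or_pos i with rfl | hi0
  · simp [Subsingleton.elim (F 0) 0]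
  · rw [hrec i hi0 (by omega)]
    exact LinearMap.range_comp_le_range _ _

theorem intertwines_of_chain
    (hrec : ∀ i : ℕ, 1 ≤ i → i ≤ l - 1 → F i = (F (i + 1)).comp (f i))
    {h : (i : ℕ) → Matrix (Fin i) (Fin i) k}
    (hint : ∀ i : ℕ, 1 ≤ i → i ≤ l - 1 → ∀ x : Fin i → k, h (i + 1) *ᵥ f i x = f i (h i *ᵥ x))
    {g : Module.End k E} (htop : ∀ x, g (F l x) = F l (h l *ᵥ x)) :
    ∀ i : ℕ, 1 ≤ i → i ≤ l → ∀ x, g (F i x) = F i (h i *ᵥ x) := by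
  intro i hi hil
  induction hil using Nat.decreasingInduction with
  | self => exact htop
  | of_succ i hil ih =>
    intro x
    rw [hrec i hi (by omega), LinearMap.comp_apply, ih (by omega), hint i hi (by omega),
      LinearMap.comp_apply]

end Chains

section CrossMatrix

variable {k : Type*} [Field k] {l : ℕ}

/-- Its determinant is the Schofield semi-invariant `s_{i,l-i}^{1,2}`; the genericity hypothesis
of `stmt13` unfolds to `(crossMatrix Fc Fc' i).det ≠ 0`. -/
def crossMatrix (F F' : (i : ℕ) → (Fin i → k) →ₗ[k] (Fin l → k)) (i : ℕ) :
    Matrix (Fin l) (Fin l) k :=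
  Matrix.of fun r c : Fin l =>
    if hc : (c : ℕ) < i then F i (Pi.single (⟨c, hc⟩ : Fin i) 1) r
    else F' (l - i)
      (Pi.single (⟨c - i, Nat.sub_lt_sub_right (not_lt.1 hc) c.isLt⟩ : Fin (l - i)) 1) r

theorem col_crossMatrix_mem (F F' : (i : ℕ) → (Fin i → k) →ₗ[k] (Fin l → k)) (i : ℕ)
    (c : Fin l) :
    (crossMatrix F F' i).col c ∈ LinearMap.range (F i) ⊔ LinearMap.range (F' (l - i)) := by
  by_cases hc : (c : ℕ) < i
  · refine Submodule.mem_sup_left ⟨Pi.single (⟨c, hc⟩ : Fin i) 1, ?_⟩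
    ext r
    simp [crossMatrix, hc]
  · refine Submodule.mem_sup_right ⟨Pi.single (⟨c - i, by omega⟩ : Fin (l - i)) 1, ?_⟩
    ext r
    simp [crossMatrix, hc]

theorem isOppositeFlags_range_of_det_crossMatrix_ne_zero
    {F F' : (i : ℕ) → (Fin i → k) →ₗ[k] (Fin l → k)}
    (hFl : F l = LinearMap.id) (hF'l : F' l = LinearMap.id)
    (hle : ∀ i < l, LinearMap.range (F i) ≤ LinearMap.range (F (i + 1)))
    (hle' : ∀ i < l, LinearMap.range (F' i) ≤ LinearMap.range (F' (i + 1)))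
    (hgen : ∀ i : ℕ, 1 ≤ i → i ≤ l - 1 → (crossMatrix F F' i).det ≠ 0) :
    IsOppositeFlags (fun i => LinearMap.range (F i)) (fun i => LinearMap.range (F' i)) l := by
  have hsplit : ∀ i ≤ l, finrank k (LinearMap.range (F i)) = i ∧
      finrank k (LinearMap.range (F' (l - i))) = l - i ∧
      LinearMap.range (F i) ⊓ LinearMap.range (F' (l - i)) = ⊥ := by
    intro i hil
    refine Submodule.finrank_eq_of_sup_eq_top (by simp; omega)
      ((LinearMap.finrank_range_le _).trans_eq (by simp))
      ((LinearMap.finrank_range_le _).trans_eq (by simp)) ?_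
    rcases Nat.eq_zero_or_pos i with rfl | hi0
    · simp [hF'l]
    rcases hil.eq_or_lt with rfl | hil
    · simp [hFl]
    exact Matrix.eq_top_of_col_mem (hgen i hi0 (by omega)) (col_crossMatrix_mem F F' i)
  refine ⟨by simp, fun i hi => (hsplit i hi).1, fun j hj => ?_, hle, hle',
    fun i hi => (hsplit i hi).2.2⟩
  have := (hsplit (l - j) (by omega)).2.1
  rwa [Nat.sub_sub_self hj] at this

end CrossMatrix

/-- freeness of the `SL_l`-action on generic pairs of decorated flags.
Let `f, f'` be two chains of linear maps `f_i, f'_i : k^i → k^{i+1}` with composites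
`F_i = f_{l−1}∘⋯∘f_i`, `F'_i = f'_{l−1}∘⋯∘f'_i : k^i → k^l` (axiomatized by
`hFl, hFrec, hF'l, hF'rec`), and assume all the cross-determinants (the values of the
Schofield semi-invariants `s_{i,j}^{1,2}`) are nonzero. If `g ∈ SL_l(k)` and
`h_i, h'_i ∈ SL_i(k)` (`1 ≤ i ≤ l−1`), with `h_l = h'_l = g`, satisfy
`h_{i+1} ∘ f_i = f_i ∘ h_i` and `h'_{i+1} ∘ f'_i = f'_i ∘ h'_i` for all `1 ≤ i ≤ l−1`,
then `g` is the identity matrix. -/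
theorem stmt13 {k : Type*} [Field k] {l : ℕ}
    (f f' : (i : ℕ) → (Fin i → k) →ₗ[k] (Fin (i + 1) → k))
    (Fc Fc' : (i : ℕ) → (Fin i → k) →ₗ[k] (Fin l → k))
    (hFl : Fc l = LinearMap.id) (hF'l : Fc' l = LinearMap.id)
    (hFrec : ∀ i : ℕ, 1 ≤ i → i ≤ l - 1 → Fc i = (Fc (i + 1)).comp (f i))
    (hF'rec : ∀ i : ℕ, 1 ≤ i → i ≤ l - 1 → Fc' i = (Fc' (i + 1)).comp (f' i))
    (hgen : ∀ i : ℕ, 1 ≤ i → i ≤ l - 1 →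
      (Matrix.of fun r c : Fin l =>
        if hc : (c : ℕ) < i then Fc i (Pi.single (⟨c, hc⟩ : Fin i) 1) r
        else Fc' (l - i)
          (Pi.single (⟨(c : ℕ) - i, by have := c.isLt; omega⟩ : Fin (l - i)) 1) r).det ≠ 0)
    (g : Matrix (Fin l) (Fin l) k) (hg : g.det = 1)
    (h h' : (i : ℕ) → Matrix (Fin i) (Fin i) k)
    (hdet : ∀ i : ℕ, 1 ≤ i → i ≤ l - 1 → (h i).det = 1 ∧ (h' i).det = 1)
    (hhl : h l = g) (hh'l : h' l = g)
    (hint : ∀ i : ℕ, 1 ≤ i → i ≤ l - 1 → ∀ x : Fin i → k,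
      (h (i + 1)).mulVec (f i x) = f i ((h i).mulVec x))
    (hint' : ∀ i : ℕ, 1 ≤ i → i ≤ l - 1 → ∀ x : Fin i → k,
      (h' (i + 1)).mulVec (f' i x) = f' i ((h' i).mulVec x)) :
    g = 1 := by
  have hflags := isOppositeFlags_range_of_det_crossMatrix_ne_zero hFl hF'l
    (fun _ => range_le_range_succ_of_chain hFrec) (fun _ => range_le_range_succ_of_chain hF'rec)
    hgen
  have hgF := intertwines_of_chain hFrec hint (g := Matrix.toLin' g) (by simp [hFl, hhl])
  have hgF' := intertwines_of_chain hF'rec hint' (g := Matrix.toLin' g) (by simp [hF'l, hh'l])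
  obtain ⟨u, μ, hμ, hmem, hind⟩ := hflags.exists_eigenvectors
    (fun i hi hil => LinearMap.range_le_comap_range (hgF i hi hil))
    (fun i hi hil => LinearMap.range_le_comap_range (hgF' i hi hil))
  have hprod : ∀ i ≤ l, ∏ t ∈ Finset.range i, μ t = 1 := by
    intro i hil
    rcases Nat.eq_zero_or_pos i with rfl | hi
    · simp
    rw [← Fin.prod_univ_eq_prod_range, ← Matrix.det_eq_prod_of_intertwines
      (LinearMap.injective_of_finrank_range_eq (by simpa using hflags.finrank_left i hil))
      (hgF i hi hil) (hind.comp _ (Fin.castLE_injective hil)) (fun t => hmem t i t.isLt hil)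
      (fun t => hμ t (by omega))]
    rcases hil.eq_or_lt with rfl | hil
    · rw [hhl, hg]
    · exact (hdet i hi (by omega)).1
  have hcard : Fintype.card (Fin l) = finrank k (Fin l → k) := by simp
  let b := basisOfLinearIndependentOfCardEqFinrank' _ hind hcard
  refine Matrix.toLin'.injective (b.ext fun t => ?_)
  simp [b, hμ t t.isLt, eq_one_of_forall_prod_range_eq_one hprod t.isLt]
end
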